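/- arXiv:1112.1933 — 9 statements merged into one kernel-verified Lean document; each statement's English description precedes it below -/
import Mathlib

section
/- If a one-dimensional cellular automaton F on alphabet A has the property B(x,y,l,r) (i.e. for every configuration c the map q ↦ F^y(c with cell 0 replaced by q)_x is a bijection of A, and for every z in [x-l, x+r] with z ≠ x the map q ↦ F^y(c with cell 0 replaced by q)_z is constant), then the image F^y(A^ℤ) contains every word of length max(l,r)+1, i.e. for every word w of length max(l,r)+1 over A there exists a configuration c such that the restriction of F^y(c) to positions 0,…,max(l,r) equals w. -/
open Filter Function

/-- Configuration `c` with cell 0 replaced by `q`. -/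
def phiCfg {A : Type*} (c : ℤ → A) (q : A) : ℤ → A := fun z => if z = 0 then q else c z

/-- Property B(x,y,l,r) for a map on configurations. -/
def propB {A : Type*} (F : (ℤ → A) → (ℤ → A)) (x : ℤ) (y l r : ℕ) : Prop :=
  (∀ c : ℤ → A, Function.Bijective fun q : A => F^[y] (phiCfg c q) x) ∧
  (∀ (c : ℤ → A) (z : ℤ), x - (l : ℤ) ≤ z → z ≤ x + (r : ℤ) → z ≠ x →
    ∀ q q' : A, F^[y] (phiCfg c q) z = F^[y] (phiCfg c q') z)

/-- The characteristic set X_p of a cellular automaton. -/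
def Xp {A : Type*} (p : ℕ) (F : (ℤ → A) → (ℤ → A)) : Set (ℝ × ℝ) :=
  {v : ℝ × ℝ | 0 ≤ v.2 ∧ ∃ k : ℕ, ∀ᶠ n : ℕ in atTop, ∃ (a : ℤ) (b : ℕ),
    (a : ℝ) = v.1 * (p : ℝ) ^ n ∧ (b : ℝ) = v.2 * (p : ℝ) ^ n ∧
    propB F a b (p ^ (n - k)) (p ^ (n - k))}

/-- One-dimensional cellular automaton: shift-commuting and defined by a local rule
on a finite neighborhood. -/
def IsCA {A : Type*} (F : (ℤ → A) → (ℤ → A)) : Prop :=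
  (∀ (c : ℤ → A) (z x : ℤ), F (fun i => c (i - z)) x = F c (x - z)) ∧
  ∃ N : Finset ℤ, ∀ (c c' : ℤ → A) (x : ℤ),
    (∀ n ∈ N, c (x + n) = c' (x + n)) → F c x = F c' x

theorem stmt0 {A : Type*} [Fintype A] (F : (ℤ → A) → (ℤ → A)) (hF : IsCA F)
    (x : ℤ) (y l r : ℕ) (hB : propB F x y l r)
    (w : Fin (max l r + 1) → A) :
    ∃ c : ℤ → A, ∀ i : Fin (max l r + 1), F^[y] c ((i : ℕ) : ℤ) = w i := by
  classical
  obtain ⟨hshift, -⟩ := hF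
  -- iterate of the shift-commutation
  have hiter : ∀ (n : ℕ) (c : ℤ → A) (z v : ℤ),
      F^[n] (fun i => c (i - z)) v = F^[n] c (v - z) := by
    intro n
    induction n with
    | zero => intro c z v; simp
    | succ n ih =>
      intro c z v
      rw [Function.iterate_succ_apply', Function.iterate_succ_apply']
      have h1 : F^[n] (fun i => c (i - z)) = fun i => F^[n] c (i - z) :=
        funext fun i => ih c z i
      rw [h1, hshift]
  -- update as shifted phiCfg
  have hupd : ∀ (d : ℤ → A) (p : ℤ) (a : A) (v : ℤ),
      F^[y] (Function.update d p a) v = F^[y] (phiCfg (fun i => d (i + p)) a) (v - p) := by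
    intro d p a v
    have h1 : Function.update d p a = fun i => phiCfg (fun i => d (i + p)) a (i - p) := by
      funext i
      by_cases h : i = p
      · simp [h, Function.update_apply, phiCfg]
      · have h2 : i - p ≠ 0 := by omega
        simp [Function.update_apply, phiCfg, h, h2]
    rw [h1, hiter]
  -- single cell constancy (shifted version)
  have hconst : ∀ (d : ℤ → A) (p : ℤ) (a : A) (v : ℤ),
      x + p - l ≤ v → v ≤ x + p + r → v ≠ x + p →
      F^[y] (Function.update d p a) v = F^[y] d v := by
    intro d p a v h1 h2 h3
    have e1 := hupd d p a v
    have e2 := hupd d p (d p) v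
    rw [Function.update_eq_self] at e2
    rw [e1, e2]
    exact hB.2 _ (v - p) (by omega) (by omega) (by omega) a (d p)
  -- shifted injectivity
  have hbij : ∀ (d : ℤ → A) (p : ℤ),
      Function.Injective fun a : A => F^[y] (Function.update d p a) (x + p) := by
    intro d p
    have h1 : (fun a : A => F^[y] (Function.update d p a) (x + p))
        = fun a => F^[y] (phiCfg (fun i => d (i + p)) a) x := by
      funext a
      rw [hupd, add_sub_cancel_right]
    rw [h1]
    exact (hB.1 _).injective
  -- multi-cell constancy
  have hmulti : ∀ (S : Finset ℤ) (v : ℤ),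
      (∀ s ∈ S, x + s - l ≤ v ∧ v ≤ x + s + r ∧ v ≠ x + s) →
      ∀ d d' : ℤ → A, (∀ z, z ∉ S → d z = d' z) → F^[y] d v = F^[y] d' v := by
    intro S
    induction S using Finset.induction_on with
    | empty =>
      intro v _ d d' h
      have : d = d' := funext fun z => h z (by simp)
      rw [this]
    | @insert s S hs ih =>
      intro v hw d d' hagree
      have hws := hw s (Finset.mem_insert_self s S)
      have h1 : F^[y] (Function.update d s (d' s)) v = F^[y] d v :=
        hconst d s (d' s) v hws.1 hws.2.1 hws.2.2
      have h2 : F^[y] (Function.update d s (d' s)) v = F^[y] d' v := by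
        refine ih v (fun t ht => hw t (Finset.mem_insert_of_mem ht)) _ _ ?_
        intro z hz
        by_cases hzs : z = s
        · subst hzs; rw [Function.update_self]
        · rw [Function.update_of_ne hzs]
          exact hagree z (by simp [hzs, hz])
      rw [← h1, h2]
  -- the configuration built from a word
  have hcond : ∀ (z : ℤ), (0 ≤ z + x ∧ z + x ≤ ((max l r : ℕ) : ℤ)) → (z + x).toNat < max l r + 1 := by
    intro z h; omega
  set cfg : (Fin (max l r + 1) → A) → ℤ → A := fun q z =>
    if h : 0 ≤ z + x ∧ z + x ≤ ((max l r : ℕ) : ℤ) then q ⟨(z + x).toNat, hcond z h⟩ else w 0 with hcfg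
  have hcfg1 : ∀ (q : Fin (max l r + 1) → A) (j : Fin (max l r + 1)), cfg q ((j : ℤ) - x) = q j := by
    intro q j
    have hj := j.isLt
    have hc : 0 ≤ ((j : ℤ) - x) + x ∧ ((j : ℤ) - x) + x ≤ ((max l r : ℕ) : ℤ) := by
      constructor <;> omega
    rw [hcfg]
    simp only
    rw [dif_pos hc]
    congr 1
    apply Fin.ext
    simp only
    omega
  have hcfg2 : ∀ (q q' : Fin (max l r + 1) → A) (z : ℤ),
      (∀ j : Fin (max l r + 1), ((j : ℤ) - x = z) → q j = q' j) → cfg q z = cfg q' z := by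
    intro q q' z h
    rw [hcfg]
    simp only
    by_cases hc : 0 ≤ z + x ∧ z + x ≤ ((max l r : ℕ) : ℤ)
    · rw [dif_pos hc, dif_pos hc]
      apply h
      simp only
      omega
    · rw [dif_neg hc, dif_neg hc]
  -- the finite map
  set G : (Fin (max l r + 1) → A) → (Fin (max l r + 1) → A) :=
    fun q j => F^[y] (cfg q) ((j : ℕ) : ℤ) with hG
  have hGinj : Function.Injective G := by
    intro q q' hqq
    by_contra hne
    have hDne : (Finset.univ.filter fun j : Fin (max l r + 1) => q j ≠ q' j).Nonempty := by
      by_contra hD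
      apply hne
      funext j
      by_contra hj
      exact hD ⟨j, by simp [hj]⟩
    -- choose extremal differing index
    obtain ⟨i, hiD, hwin⟩ : ∃ i : Fin (max l r + 1), q i ≠ q' i ∧
        ∀ j : Fin (max l r + 1), q j ≠ q' j → j ≠ i →
          ((j : ℤ) - l ≤ (i : ℤ) ∧ (i : ℤ) ≤ (j : ℤ) + r ∧ (i : ℤ) ≠ (j : ℤ)) := by
      rcases le_total r l with hl | hl
      · -- max l r = l, take minimal
        set D := Finset.univ.filter fun j : Fin (max l r + 1) => q j ≠ q' j with hD
        refine ⟨D.min' hDne, ?_, ?_⟩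
        · exact (Finset.mem_filter.mp (D.min'_mem hDne)).2
        · intro j hj hji
          have hjD : j ∈ D := Finset.mem_filter.mpr ⟨Finset.mem_univ j, hj⟩
          have h1 : (D.min' hDne : ℕ) ≤ (j : ℕ) := D.min'_le j hjD
          have h2 : (j : ℕ) < max l r + 1 := j.isLt
          have h3 : max l r = l := max_eq_left hl
          have h4 : (j : ℕ) ≠ ((D.min' hDne : Fin (max l r + 1)) : ℕ) :=
            fun hc => hji (Fin.ext hc)
          refine ⟨by omega, by omega, by omega⟩
      · -- max l r = r, take maximal
        set D := Finset.univ.filter fun j : Fin (max l r + 1) => q j ≠ q' j with hD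
        refine ⟨D.max' hDne, ?_, ?_⟩
        · exact (Finset.mem_filter.mp (D.max'_mem hDne)).2
        · intro j hj hji
          have hjD : j ∈ D := Finset.mem_filter.mpr ⟨Finset.mem_univ j, hj⟩
          have h1 : (j : ℕ) ≤ (D.max' hDne : ℕ) := D.le_max' j hjD
          have h2 : ((D.max' hDne : Fin (max l r + 1)) : ℕ) < max l r + 1 := (D.max' hDne).isLt
          have h3 : max l r = r := max_eq_right hl
          have h4 : (j : ℕ) ≠ ((D.max' hDne : Fin (max l r + 1)) : ℕ) :=
            fun hc => hji (Fin.ext hc)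
          refine ⟨by omega, by omega, by omega⟩
    set ti : ℤ := (i : ℤ) - x with hti
    set d' : ℤ → A := Function.update (cfg q') ti (q i) with hd'
    set S : Finset ℤ := (Finset.univ.filter fun j : Fin (max l r + 1) => q j ≠ q' j ∧ j ≠ i).image
      (fun j : Fin (max l r + 1) => (j : ℤ) - x) with hS
    have hstep : F^[y] (cfg q) ((i : ℕ) : ℤ) = F^[y] d' ((i : ℕ) : ℤ) := by
      apply hmulti S ((i : ℕ) : ℤ)
      · intro s hsS
        rw [hS, Finset.mem_image] at hsS
        obtain ⟨j, hjmem, hjs⟩ := hsS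
        rw [Finset.mem_filter] at hjmem
        obtain ⟨h1, h2⟩ := hwin j hjmem.2.1 hjmem.2.2
        refine ⟨by omega, by omega, by omega⟩
      · intro z hz
        by_cases hzi : z = ti
        · subst hzi
          rw [hd', Function.update_self, hti, hcfg1]
        · rw [hd', Function.update_of_ne hzi]
          apply hcfg2
          intro j hjz
          by_contra hqj
          have hjne : j ≠ i := by
            intro hc; subst hc; apply hzi; rw [hti, hjz]
          apply hz
          rw [hS, Finset.mem_image]
          exact ⟨j, by simp [hqj, hjne], hjz⟩
    have hfin : F^[y] d' ((i : ℕ) : ℤ) ≠ F^[y] (cfg q') ((i : ℕ) : ℤ) := by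
      intro heq
      apply hiD
      apply hbij (cfg q') ti
      have hx : x + ti = ((i : ℕ) : ℤ) := by omega
      have h2 : Function.update (cfg q') ti (q' i) = cfg q' := by
        funext z
        by_cases hz : z = ti
        · subst hz; rw [Function.update_self, hti, hcfg1]
        · rw [Function.update_of_ne hz]
      show F^[y] (Function.update (cfg q') ti (q i)) (x + ti)
          = F^[y] (Function.update (cfg q') ti (q' i)) (x + ti)
      rw [h2, hx]
      exact heq
    exact hfin (hstep ▸ congrFun hqq i)
  have hGsurj : Function.Surjective G := Finite.injective_iff_surjective.mp hGinj
  obtain ⟨q, hq⟩ := hGsurj w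
  exact ⟨cfg q, fun i => congrFun hq i⟩
end

section
/- Let F be a one-dimensional cellular automaton and let N^{y'} be a finite neighborhood for F^{y'} (i.e. F^{y'}(c)_z depends only on the values c_{z+n} for n ∈ N^{y'}). If F satisfies B(x,y,l,r) and B(x',y',l',r'), and the set [x'-l', x'+r'] + N^{y'} is contained in [-l, r], then F satisfies B(x+x', y+y', l', r'). -/
open Filter Function

theorem stmt1 {A : Type*} (F : (ℤ → A) → (ℤ → A)) (hF : IsCA F)
    (x x' : ℤ) (y y' l r l' r' : ℕ) (N' : Finset ℤ)
    (hN' : ∀ (c c' : ℤ → A) (z : ℤ),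
      (∀ n ∈ N', c (z + n) = c' (z + n)) → F^[y'] c z = F^[y'] c' z)
    (h1 : propB F x y l r) (h2 : propB F x' y' l' r')
    (hsub : ∀ w : ℤ, x' - (l' : ℤ) ≤ w → w ≤ x' + (r' : ℤ) →
      ∀ n ∈ N', -(l : ℤ) ≤ w + n ∧ w + n ≤ (r : ℤ)) :
    propB F (x + x') (y + y') l' r' := by
  obtain ⟨hshift, -⟩ := hF
  have one : ∀ (c : ℤ → A) (w : ℤ), F (fun i => c (i + x)) w = F c (w + x) := by
    intro c w
    have := hshift c (-x) w
    simpa [sub_neg_eq_add] using this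
  have shiftIter : ∀ (k : ℕ) (c : ℤ → A) (w : ℤ),
      F^[k] (fun i => c (i + x)) w = F^[k] c (w + x) := by
    intro k
    induction k with
    | zero => intro c w; simp
    | succ k ih =>
      intro c w
      rw [Function.iterate_succ_apply, Function.iterate_succ_apply]
      have h : F (fun i => c (i + x)) = fun i => F c (i + x) := funext fun v => one c v
      rw [h, ih]
  -- key lemma: for each config c, the composite at shifted positions
  have key : ∀ (c : ℤ → A) (q : A) (w : ℤ), x' - (l' : ℤ) ≤ w → w ≤ x' + (r' : ℤ) →
      F^[y + y'] (phiCfg c q) (w + x) =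
      F^[y'] (phiCfg (fun z => F^[y] (phiCfg c (c 0)) (z + x))
        (F^[y] (phiCfg c q) x)) w := by
    intro c q w hw1 hw2
    have step1 : F^[y + y'] (phiCfg c q) (w + x)
        = F^[y'] (fun i => F^[y] (phiCfg c q) (i + x)) w := by
      rw [add_comm y y', Function.iterate_add_apply, shiftIter]
    rw [step1]
    apply hN'
    intro n hn
    obtain ⟨hln, hrn⟩ := hsub w hw1 hw2 n hn
    by_cases h0 : w + n = 0
    · simp [phiCfg, h0]
    · have : phiCfg (fun z => F^[y] (phiCfg c (c 0)) (z + x))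
          (F^[y] (phiCfg c q) x) (w + n) = F^[y] (phiCfg c (c 0)) ((w + n) + x) := by
        simp [phiCfg, h0]
      rw [this]
      exact h1.2 c ((w + n) + x) (by omega) (by omega) (by omega) q (c 0)
  constructor
  · intro c
    have hcomp : (fun q : A => F^[y + y'] (phiCfg c q) (x + x')) =
        (fun s : A => F^[y'] (phiCfg (fun z => F^[y] (phiCfg c (c 0)) (z + x)) s) x') ∘
        (fun q : A => F^[y] (phiCfg c q) x) := by
      funext q
      have := key c q x' (by omega) (by omega)
      simpa [add_comm x x'] using this
    rw [hcomp]
    exact (h2.1 _).comp (h1.1 c)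
  · intro c z hz1 hz2 hz3 q q'
    have hw1 : x' - (l' : ℤ) ≤ z - x := by omega
    have hw2 : z - x ≤ x' + (r' : ℤ) := by omega
    have e1 := key c q (z - x) hw1 hw2
    have e2 := key c q' (z - x) hw1 hw2
    rw [sub_add_cancel] at e1 e2
    rw [e1, e2]
    exact h2.2 _ (z - x) hw1 hw2 (by omega) _ _
end

section
/- If a one-dimensional cellular automaton F is not surjective and p ≥ 2 is an integer, then X_p(F) = {(0,0)}, where X_p(F) is the set of points (x,y) ∈ ℝ × [0,∞) such that for some k ∈ ℕ and all sufficiently large n ∈ ℕ, xp^n and yp^n are integers and F has property B(xp^n, yp^n, p^{n-k}, p^{n-k}). -/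
open Filter Function

section Aux

variable {A : Type*}

/-- Configuration `c` with cell `t` replaced by `q`. -/
def phiAt (t : ℤ) (c : ℤ → A) (q : A) : ℤ → A := fun z => if z = t then q else c z

lemma phiAt_self (t : ℤ) (c : ℤ → A) : phiAt t c (c t) = c := by
  funext z
  simp only [phiAt]
  split <;> simp_all

lemma iter_shift (F : (ℤ → A) → (ℤ → A))
    (hsh : ∀ (c : ℤ → A) (z x : ℤ), F (fun i => c (i - z)) x = F c (x - z)) (b : ℕ) :
    ∀ (c : ℤ → A) (z x : ℤ), F^[b] (fun i => c (i - z)) x = F^[b] c (x - z) := by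
  induction b with
  | zero => intro c z x; simp
  | succ b ih =>
    intro c z x
    have h1 : F (fun i => c (i - z)) = fun x => F c (x - z) := funext fun x => hsh c z x
    rw [Function.iterate_succ_apply, Function.iterate_succ_apply, h1]
    exact ih (F c) z x

lemma phiAt_eq (t : ℤ) (c : ℤ → A) (q : A) :
    phiAt t c q = fun i => (phiCfg (fun j => c (j + t)) q) (i - t) := by
  funext i
  simp only [phiAt, phiCfg]
  by_cases h : i = t
  · subst h; simp
  · rw [if_neg h, if_neg (by omega : i - t ≠ 0)]
    congr 1
    omega

lemma shifted_surj (F : (ℤ → A) → (ℤ → A))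
    (hsh : ∀ (c : ℤ → A) (z x : ℤ), F (fun i => c (i - z)) x = F c (x - z))
    {a : ℤ} {b l : ℕ} (hB : propB F a b l l) (t : ℤ) (c : ℤ → A) (v : A) :
    ∃ q : A, F^[b] (phiAt t c q) (a + t) = v := by
  obtain ⟨q, hq⟩ := (hB.1 (fun j => c (j + t))).2 v
  refine ⟨q, ?_⟩
  rw [phiAt_eq, iter_shift F hsh b _ t (a + t)]
  have h : a + t - t = a := by omega
  rw [h]
  exact hq

lemma shifted_const (F : (ℤ → A) → (ℤ → A))
    (hsh : ∀ (c : ℤ → A) (z x : ℤ), F (fun i => c (i - z)) x = F c (x - z))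
    {a : ℤ} {b l : ℕ} (hB : propB F a b l l) (t : ℤ) (c : ℤ → A)
    (z : ℤ) (h1 : a + t - (l : ℤ) ≤ z) (h2 : z ≤ a + t + (l : ℤ)) (h3 : z ≠ a + t)
    (q q' : A) :
    F^[b] (phiAt t c q) z = F^[b] (phiAt t c q') z := by
  rw [phiAt_eq t c q, phiAt_eq t c q', iter_shift F hsh b _ t z, iter_shift F hsh b _ t z]
  exact hB.2 _ (z - t) (by omega) (by omega) (by omega) q q'

lemma window [Nonempty A] (F : (ℤ → A) → (ℤ → A))
    (hsh : ∀ (c : ℤ → A) (z x : ℤ), F (fun i => c (i - z)) x = F c (x - z))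
    {a : ℤ} {b l : ℕ} (hB : propB F a b l l) (L : ℕ) (hl : 2 * L ≤ l) (d : ℤ → A) :
    ∃ c, ∀ z : ℤ, -(L : ℤ) ≤ z → z ≤ L → F^[b] c z = d z := by
  have key : ∀ j : ℕ, ∃ c, ∀ i : ℕ, i ≤ j → i ≤ 2 * L →
      F^[b] c (a + (i : ℤ)) = d ((i : ℤ) - L) := by
    intro j
    induction j with
    | zero =>
      obtain ⟨q, hq⟩ := shifted_surj F hsh hB ((0 : ℕ) : ℤ) (Classical.arbitrary (ℤ → A))
        (d (((0 : ℕ) : ℤ) - L))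
      refine ⟨phiAt ((0 : ℕ) : ℤ) (Classical.arbitrary (ℤ → A)) q, fun i hi _ => ?_⟩
      obtain rfl : i = 0 := Nat.le_zero.mp hi
      exact hq
    | succ j ih =>
      obtain ⟨c, hc⟩ := ih
      by_cases hj : j + 1 ≤ 2 * L
      · obtain ⟨q, hq⟩ := shifted_surj F hsh hB ((j + 1 : ℕ) : ℤ) c (d (((j + 1 : ℕ) : ℤ) - L))
        refine ⟨phiAt ((j + 1 : ℕ) : ℤ) c q, fun i hi hi2 => ?_⟩
        rcases Nat.lt_or_ge i (j + 1) with h | h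
        · have step : F^[b] (phiAt ((j + 1 : ℕ) : ℤ) c q) (a + (i : ℤ)) =
              F^[b] (phiAt ((j + 1 : ℕ) : ℤ) c (c ((j + 1 : ℕ) : ℤ))) (a + (i : ℤ)) := by
            apply shifted_const F hsh hB
            · push_cast; omega
            · push_cast; omega
            · push_cast; omega
          rw [step, phiAt_self]
          exact hc i (by omega) hi2
        · obtain rfl : i = j + 1 := by omega
          exact hq
      · exact ⟨c, fun i hi hi2 => hc i (by omega) hi2⟩
  obtain ⟨c, hc⟩ := key (2 * L)
  refine ⟨fun i => c (i - (-(a + L))), fun z h1 h2 => ?_⟩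
  rw [iter_shift F hsh b c (-(a + L)) z]
  obtain ⟨i, hiz, hi2⟩ : ∃ i : ℕ, (i : ℤ) = z + L ∧ i ≤ 2 * L :=
    ⟨(z + L).toNat, by omega, by omega⟩
  have h := hc i hi2 hi2
  rw [show z - (-(a + (L : ℤ))) = a + (i : ℤ) by omega, h, show (i : ℤ) - L = z by omega]

lemma surj_of_dense {A : Type*} [Fintype A] [Nonempty A] (F : (ℤ → A) → (ℤ → A))
    (hloc : ∃ N : Finset ℤ, ∀ (c c' : ℤ → A) (x : ℤ),
      (∀ n ∈ N, c (x + n) = c' (x + n)) → F c x = F c' x)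
    (h : ∀ (d : ℤ → A) (L : ℕ), ∃ c, ∀ z : ℤ, -(L : ℤ) ≤ z → z ≤ L → F c z = d z) :
    Function.Surjective F := by
  letI : TopologicalSpace A := ⊥
  haveI : DiscreteTopology A := ⟨rfl⟩
  obtain ⟨N, hN⟩ := hloc
  obtain ⟨c₀⟩ := (inferInstance : Nonempty (ℤ → A))
  have hcont : Continuous F := by
    apply continuous_pi
    intro x
    have heq : (fun c : ℤ → A => F c x) =
        (fun v : {n // n ∈ N} → A =>
          F (fun i => if hi : i - x ∈ N then v ⟨i - x, hi⟩ else c₀ i) x)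
          ∘ (fun c (n : {n // n ∈ N}) => c (x + n.1)) := by
      funext c
      show F c x = F (fun i => if hi : i - x ∈ N then c (x + (i - x)) else c₀ i) x
      apply hN
      intro n hn
      have hmem : x + n - x ∈ N := by simpa using hn
      rw [dif_pos hmem]
      congr 1
      omega
    rw [heq]
    exact continuous_of_discreteTopology.comp
      (continuous_pi fun n => continuous_apply (x + n.1))
  intro d
  choose c hc using fun L => h d L
  have hmem : ∀ᶠ L : ℕ in atTop, F (c L) ∈ Set.range F :=
    Eventually.of_forall fun L => ⟨c L, rfl⟩
  have htend : Tendsto (fun L => F (c L)) atTop (nhds d) := by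
    rw [tendsto_pi_nhds]
    intro x
    refine Tendsto.congr' ?_ tendsto_const_nhds
    filter_upwards [eventually_ge_atTop x.natAbs] with L hL
    exact (hc L x (by omega) (by omega)).symm
  have hclosed : IsClosed (Set.range F) := (isCompact_range hcont).isClosed
  have hd : d ∈ closure (Set.range F) := mem_closure_of_tendsto htend hmem
  rwa [hclosed.closure_eq] at hd

end Aux

theorem stmt2 {A : Type*} [Fintype A] (F : (ℤ → A) → (ℤ → A)) (hF : IsCA F)
    (hns : ¬ Function.Surjective F) (p : ℕ) (hp : 2 ≤ p) :
    Xp p F = {((0 : ℝ), (0 : ℝ))} := by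
  obtain ⟨hsh, hloc⟩ := hF
  haveI : Nontrivial A := by
    rcases subsingleton_or_nontrivial A with hs | hs
    · exact absurd (fun d => ⟨d, Subsingleton.elim _ _⟩) hns
    · exact hs
  haveI : Nonempty A := inferInstance
  ext ⟨x, y⟩
  simp only [Xp, Set.mem_setOf_eq, Set.mem_singleton_iff, Prod.mk.injEq]
  constructor
  · rintro ⟨hy, k, hE⟩
    rw [eventually_atTop] at hE
    obtain ⟨n₀, hn₀⟩ := hE
    have hppos : (0 : ℝ) < (p : ℝ) := by
      have : (0 : ℕ) < p := by omega
      exact_mod_cast this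
    have hy0 : y = 0 := by
      by_contra hy0
      apply hns
      apply surj_of_dense F hloc
      intro d L
      obtain ⟨a, b, ha, hb, hB⟩ := hn₀ (n₀ + k + 2 * L) (by omega)
      have hbne : b ≠ 0 := by
        intro h0
        rw [h0] at hb
        have hyp : y * (p : ℝ) ^ (n₀ + k + 2 * L) = 0 := by exact_mod_cast hb.symm
        rcases mul_eq_zero.mp hyp with h | h
        · exact hy0 h
        · exact absurd h (by positivity)
      have hl : 2 * L ≤ p ^ (n₀ + k + 2 * L - k) := by
        have h1 : 2 * L < p ^ (2 * L) := Nat.lt_pow_self (by omega : 1 < p)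
        have h2 : p ^ (2 * L) ≤ p ^ (n₀ + k + 2 * L - k) :=
          Nat.pow_le_pow_right (by omega) (by omega)
        omega
      obtain ⟨c, hc⟩ := window F hsh hB L hl d
      obtain ⟨b', rfl⟩ := Nat.exists_eq_succ_of_ne_zero hbne
      refine ⟨F^[b'] c, fun z h1 h2 => ?_⟩
      rw [← Function.iterate_succ_apply' F b' c]
      exact hc z h1 h2
    subst hy0
    refine ⟨?_, rfl⟩
    by_contra hx
    obtain ⟨a, b, ha, hb, hB⟩ := hn₀ n₀ le_rfl
    have hb0 : b = 0 := by
      have : (b : ℝ) = 0 := by rw [hb]; ring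
      exact_mod_cast this
    subst hb0
    have ha0 : a ≠ 0 := by
      intro h0
      rw [h0] at ha
      have hxp : x * (p : ℝ) ^ n₀ = 0 := by exact_mod_cast ha.symm
      rcases mul_eq_zero.mp hxp with h | h
      · exact hx h
      · exact absurd h (by positivity)
    obtain ⟨q, q', hqq⟩ := exists_pair_ne A
    apply hqq
    apply (hB.1 (Classical.arbitrary (ℤ → A))).1
    show F^[0] (phiCfg _ q) a = F^[0] (phiCfg _ q') a
    simp [phiCfg, ha0]
  · rintro ⟨hx, hy⟩
    subst hx
    subst hy
    refine ⟨le_refl 0, 0, Eventually.of_forall fun n => ⟨0, 0, by simp, by simp, ?_, ?_⟩⟩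
    · intro c
      have h1 : (fun q : A => F^[0] (phiCfg c q) 0) = id := by
        funext q
        simp [phiCfg]
      rw [h1]
      exact Function.bijective_id
    · intro c z _ _ hz q q'
      simp [phiCfg, hz]
end

section
/- If G is a sub-automaton of F (i.e. there is an injection φ from the alphabet of G into the alphabet of F whose cellwise extension intertwines G and F), then for every integer p ≥ 2, X_p(F) ⊆ X_p(G). -/
open Filter Function

theorem stmt6 {A B : Type*} [Fintype A] [Fintype B]
    (F : (ℤ → A) → (ℤ → A)) (G : (ℤ → B) → (ℤ → B))
    (φ : B → A) (hinj : Function.Injective φ)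
    (hcomm : ∀ c : ℤ → B, (fun z => φ (G c z)) = F (fun z => φ (c z)))
    (p : ℕ) (hp : 2 ≤ p) :
    Xp p F ⊆ Xp p G := by
  have hiter : ∀ (y : ℕ) (c : ℤ → B),
      (fun z => φ (G^[y] c z)) = F^[y] (fun z => φ (c z)) := by
    intro y
    induction y with
    | zero => intro c; rfl
    | succ n ih =>
      intro c
      rw [Function.iterate_succ_apply, Function.iterate_succ_apply, ih (G c), hcomm]
  have hphi : ∀ (c : ℤ → B) (q : B),
      (fun z => φ (phiCfg c q z)) = phiCfg (fun z => φ (c z)) (φ q) := by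
    intro c q; funext z
    simp only [phiCfg]; split <;> rfl
  have key : ∀ (a : ℤ) (b l r : ℕ), propB F a b l r → propB G a b l r := by
    intro a b l r ⟨hbij, hconst⟩
    constructor
    · intro c
      have hi : Function.Injective fun q : B => G^[b] (phiCfg c q) a := by
        intro q q' h
        apply hinj
        apply (hbij (fun z => φ (c z))).injective (a₁ := φ q) (a₂ := φ q')
        show F^[b] (phiCfg (fun z => φ (c z)) (φ q)) a = F^[b] (phiCfg (fun z => φ (c z)) (φ q')) a
        rw [← hphi c q, ← hphi c q', ← hiter, ← hiter]
        simp only at h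
        show φ (G^[b] (phiCfg c q) a) = φ (G^[b] (phiCfg c q') a)
        rw [h]
      exact Finite.injective_iff_bijective.mp hi
    · intro c z h1 h2 h3 q q'
      apply hinj
      have e1 : φ (G^[b] (phiCfg c q) z) = F^[b] (phiCfg (fun z => φ (c z)) (φ q)) z := by
        rw [← hphi, ← hiter]
      have e2 : φ (G^[b] (phiCfg c q') z) = F^[b] (phiCfg (fun z => φ (c z)) (φ q')) z := by
        rw [← hphi, ← hiter]
      rw [e1, e2]
      exact hconst _ z h1 h2 h3 _ _
  rintro ⟨x, y⟩ ⟨hy, k, hev⟩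
  refine ⟨hy, k, ?_⟩
  filter_upwards [hev] with n ⟨a, b, ha, hb, hB⟩
  exact ⟨a, b, ha, hb, key a b _ _ hB⟩
end

section
/- If F is the identity cellular automaton on a finite alphabet A with at least two elements, then for every integer p ≥ 2, X_p(F) = {(0,y) : y ∈ ℝ, y ≥ 0, y has finite base-p expansion} ∪ {(0,0)}; in particular the closure of X_p(F) is the vertical half-line {0} × [0,∞). -/
open Filter Function

lemma propB_id_iff {A : Type*} [Nontrivial A] (a : ℤ) (b l r : ℕ) :
    propB (id : (ℤ → A) → (ℤ → A)) a b l r ↔ a = 0 := by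
  simp only [propB, Function.iterate_id, id_eq]
  constructor
  · rintro ⟨h1, -⟩
    by_contra ha
    obtain ⟨q, q', hqq⟩ := exists_pair_ne A
    exact hqq ((h1 (fun _ => q)).injective (by simp [phiCfg, ha]))
  · rintro rfl
    refine ⟨fun c => ?_, fun c z _ _ hz q q' => ?_⟩
    · have h : (fun q : A => phiCfg c q 0) = fun q => q := by
        funext q; simp [phiCfg]
      rw [h]; exact Function.bijective_id
    · simp [phiCfg, hz]

lemma Xp_id {A : Type*} [Nontrivial A] (p : ℕ) (hp : 2 ≤ p) :
    Xp p (id : (ℤ → A) → (ℤ → A)) =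
      {v : ℝ × ℝ | v.1 = 0 ∧ 0 ≤ v.2 ∧ ∃ (b n : ℕ), (b : ℝ) = v.2 * (p : ℝ) ^ n} := by
  have hp0 : (0:ℝ) < p := by exact_mod_cast (by omega : 0 < p)
  ext ⟨x, y⟩
  simp only [Xp, Set.mem_setOf_eq]
  constructor
  · rintro ⟨hy, k, hev⟩
    obtain ⟨n, a, b, ha, hb, hB⟩ := hev.exists
    have ha0 : a = 0 := (propB_id_iff a b _ _).1 hB
    have hx : x = 0 := by
      rw [ha0] at ha
      have ha' : x * (p:ℝ) ^ n = 0 := by exact_mod_cast ha.symm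
      have := mul_eq_zero.1 ha'
      rcases this with h | h
      · exact h
      · exact absurd h (by positivity)
    exact ⟨hx, hy, b, n, hb⟩
  · rintro ⟨hx, hy, b, n₀, hb⟩
    refine ⟨hy, 0, ?_⟩
    filter_upwards [eventually_ge_atTop n₀] with n hn
    refine ⟨0, b * p ^ (n - n₀), by simp [hx], ?_, (propB_id_iff _ _ _ _).2 rfl⟩
    push_cast
    rw [hb, mul_assoc, ← pow_add]
    congr 2
    omega

theorem stmt7 {A : Type*} [Fintype A] [Nontrivial A] (p : ℕ) (hp : 2 ≤ p) :
    Xp p (id : (ℤ → A) → (ℤ → A)) =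
      ({v : ℝ × ℝ | v.1 = 0 ∧ 0 ≤ v.2 ∧ ∃ (b n : ℕ), (b : ℝ) = v.2 * (p : ℝ) ^ n}
        ∪ {((0 : ℝ), (0 : ℝ))}) ∧
    closure (Xp p (id : (ℤ → A) → (ℤ → A))) = {(0 : ℝ)} ×ˢ Set.Ici (0 : ℝ) := by
  have hp0 : (0:ℝ) < p := by exact_mod_cast (by omega : 0 < p)
  have hp1 : (1:ℝ) < p := by exact_mod_cast (by omega : 1 < p)
  have hX := Xp_id (A := A) p hp
  constructor
  · rw [hX]
    apply Set.Subset.antisymm Set.subset_union_left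
    rintro v (h | h)
    · exact h
    · rw [Set.mem_singleton_iff] at h
      subst h
      exact ⟨rfl, le_refl 0, 0, 0, by norm_num⟩
  · apply Set.Subset.antisymm
    · apply closure_minimal
      · rw [hX]
        rintro v ⟨h1, h2, -⟩
        exact ⟨h1, h2⟩
      · exact isClosed_singleton.prod isClosed_Ici
    · rintro ⟨x, y⟩ ⟨hx, hy⟩
      simp only [Set.mem_singleton_iff] at hx
      simp only [Set.mem_Ici] at hy
      subst hx
      set seq : ℕ → ℝ × ℝ := fun n => ((0:ℝ), (⌊y * (p:ℝ) ^ n⌋ : ℝ) / (p:ℝ) ^ n) with hseq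
      have hmem : ∀ n, seq n ∈ Xp p (id : (ℤ → A) → (ℤ → A)) := by
        intro n
        rw [hX]
        have hpn : (0:ℝ) < (p:ℝ) ^ n := by positivity
        have hfl : (0:ℤ) ≤ ⌊y * (p:ℝ) ^ n⌋ := Int.floor_nonneg.2 (by positivity)
        refine ⟨rfl, by positivity, ⟨(⌊y * (p:ℝ) ^ n⌋).toNat, n, ?_⟩⟩
        have hcast : ((⌊y * (p:ℝ) ^ n⌋.toNat : ℕ) : ℝ) = (⌊y * (p:ℝ) ^ n⌋ : ℝ) := by
          exact_mod_cast congrArg (Int.cast : ℤ → ℝ) (Int.toNat_of_nonneg hfl)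
        rw [hcast]
        simp only [hseq]
        field_simp
      have htend : Tendsto seq atTop (nhds ((0:ℝ), y)) := by
        refine Tendsto.prodMk_nhds tendsto_const_nhds ?_
        have hub : ∀ n, (⌊y * (p:ℝ) ^ n⌋ : ℝ) / (p:ℝ) ^ n ≤ y := by
          intro n
          rw [div_le_iff₀ (by positivity)]
          exact Int.floor_le _
        have hlb : ∀ n, y - (1/(p:ℝ)) ^ n ≤ (⌊y * (p:ℝ) ^ n⌋ : ℝ) / (p:ℝ) ^ n := by
          intro n
          rw [sub_le_iff_le_add, div_add' _ _ _ (by positivity), le_div_iff₀ (by positivity)]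
          have h1 : y * (p:ℝ)^n - 1 < ⌊y * (p:ℝ) ^ n⌋ := Int.sub_one_lt_floor _
          have h2 : (1/(p:ℝ))^n * (p:ℝ)^n = 1 := by
            rw [← mul_pow]
            field_simp
            exact one_pow n
          nlinarith
        have hglim : Tendsto (fun n => y - (1/(p:ℝ)) ^ n) atTop (nhds y) := by
          have : Tendsto (fun n : ℕ => (1/(p:ℝ)) ^ n) atTop (nhds 0) :=
            tendsto_pow_atTop_nhds_zero_of_lt_one (by positivity) ((div_lt_one hp0).2 hp1)
          simpa using tendsto_const_nhds.sub this
        exact tendsto_of_tendsto_of_tendsto_of_le_of_le hglim tendsto_const_nhds hlb hub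
      exact mem_closure_of_tendsto htend (Eventually.of_forall hmem)
end

section
/- If F is a nilpotent cellular automaton (i.e. there exists t ≥ 1 such that F^t is a constant map on configurations), then for every integer p ≥ 2, X_p(F) = {(0,0)}. -/
open Filter Function

theorem stmt8 {A : Type*} [Fintype A] [Nontrivial A] (F : (ℤ → A) → (ℤ → A))
    (hF : IsCA F) (hnil : ∃ t : ℕ, 1 ≤ t ∧ ∃ c₀ : ℤ → A, ∀ c, F^[t] c = c₀)
    (p : ℕ) (hp : 2 ≤ p) :
    Xp p F = {((0 : ℝ), (0 : ℝ))} := by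
  ext ⟨x, y⟩
  simp only [Set.mem_singleton_iff, Prod.mk.injEq]
  obtain ⟨t, ht1, c₀, hc₀⟩ := hnil
  obtain ⟨q₀, q₁, hq⟩ := exists_pair_ne A
  constructor
  · rintro ⟨hy, k, hk⟩
    have hp1 : (1:ℝ) < p := by exact_mod_cast lt_of_lt_of_le one_lt_two hp
    have hppos : (0:ℝ) < p := lt_trans one_pos hp1
    have hy0 : y = 0 := by
      by_contra hyne
      have hypos : 0 < y := lt_of_le_of_ne hy (Ne.symm hyne)
      have htend : Tendsto (fun n : ℕ => y * (p:ℝ)^n) atTop atTop :=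
        Tendsto.const_mul_atTop hypos (tendsto_pow_atTop_atTop_of_one_lt hp1)
      have hev : ∀ᶠ n in atTop, (t:ℝ) ≤ y * (p:ℝ)^n := htend.eventually_ge_atTop t
      obtain ⟨n, ⟨a, b, ha, hb, hB⟩, hge⟩ := (hk.and hev).exists
      have hbt : t ≤ b := by
        have : (t:ℝ) ≤ (b:ℝ) := hb ▸ hge
        exact_mod_cast this
      have hsplit : ∀ c : ℤ → A, F^[b] c = F^[b - t] c₀ := by
        intro c
        conv_lhs => rw [show b = (b - t) + t from (Nat.sub_add_cancel hbt).symm]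
        rw [Function.iterate_add_apply, hc₀]
      have hconst : F^[b] (phiCfg (fun _ => q₀) q₀) a = F^[b] (phiCfg (fun _ => q₀) q₁) a := by
        rw [hsplit, hsplit]
      exact hq ((hB.1 (fun _ => q₀)).1 hconst)
    refine ⟨?_, hy0⟩
    obtain ⟨n, a, b, ha, hb, hB⟩ := hk.exists
    have ha0 : a = 0 := by
      by_contra hane
      have hconst : F^[b] (phiCfg (fun _ => q₀) q₀) a = F^[b] (phiCfg (fun _ => q₀) q₁) a := by
        have hb0 : b = 0 := by
          have : (b:ℝ) = 0 := by rw [hb, hy0, zero_mul]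
          exact_mod_cast this
        subst hb0
        simp [phiCfg, hane]
      exact absurd ((hB.1 (fun _ => q₀)).1 hconst) hq
    have : (0:ℝ) = x * (p:ℝ)^n := by rw [← ha, ha0]; simp
    have hpn : (p:ℝ)^n ≠ 0 := pow_ne_zero _ (ne_of_gt hppos)
    rcases mul_eq_zero.mp this.symm with h | h
    · exact h
    · exact absurd h hpn
  · rintro ⟨hx, hy⟩
    subst hx; subst hy
    refine ⟨le_refl 0, 0, Filter.Eventually.of_forall fun n => ⟨0, 0, by simp, by simp, ?_, ?_⟩⟩
    · intro c
      have : (fun q : A => F^[0] (phiCfg c q) 0) = id := by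
        funext q; simp [phiCfg]
      rw [this]; exact Function.bijective_id
    · intro c z _ _ hz q q'
      simp [phiCfg, hz]
end

section
/- Let ⊕ be the XOR cellular automaton on ℤ/2ℤ given by ⊕(c)_x = c(x) + c(x-1). Then for every k ≥ 0, ⊕ fulfills property B(0, 2^k, l, 0) for every l ∈ ℕ; in particular ⊕^{2^k}(c)_0 = c(0) + c(-2^k), and for z ∈ [-l, 0) the value ⊕^{2^k}(c)_z does not depend on c(0). Consequently (0,1) ∈ X_2(⊕) and ⊕ is surjective. -/
open Filter Function

/-- The XOR cellular automaton over ℤ/2ℤ. -/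
def xorCA (c : ℤ → ZMod 2) : ℤ → ZMod 2 := fun x => c x + c (x - 1)

lemma iter_pow (k : ℕ) : ∀ (c : ℤ → ZMod 2) (x : ℤ), xorCA^[2^k] c x = c x + c (x - 2^k) := by
  induction k with
  | zero => intro c x; simp [xorCA]
  | succ k ih =>
    intro c x
    have h : (2:ℕ)^(k+1) = 2^k + 2^k := by ring
    rw [h, Function.iterate_add_apply, ih, ih, ih]
    have h2 : ∀ a b e : ZMod 2, a + b + (b + e) = a + e := by decide
    rw [h2]
    congr 1
    ring_nf

lemma propB_xor (k l r : ℕ) (hr : (r : ℤ) < 2 ^ k) : propB xorCA 0 (2 ^ k) l r := by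
  constructor
  · intro c
    have he : (fun q : ZMod 2 => xorCA^[2^k] (phiCfg c q) 0)
        = fun q : ZMod 2 => q + c (0 - 2^k) := by
      funext q
      rw [iter_pow]
      have h1 : phiCfg c q 0 = q := by simp [phiCfg]
      have h2 : phiCfg c q ((0:ℤ) - 2^k) = c (0 - 2^k) := by
        have : ((0:ℤ) - 2^k) ≠ 0 := by
          rw [zero_sub, neg_ne_zero]; positivity
        simp [phiCfg, this]
      rw [h1, h2]
    rw [he]
    exact (Equiv.addRight (c ((0:ℤ) - 2^k))).bijective
  · intro c z hl hrz hz q q'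
    rw [iter_pow, iter_pow]
    have h1 : phiCfg c q z = phiCfg c q' z := by simp [phiCfg, hz]
    have hz2 : z - 2^k ≠ 0 := by
      intro h
      have : z = 2^k := by omega
      omega
    have h2 : phiCfg c q (z - 2^k) = phiCfg c q' (z - 2^k) := by simp [phiCfg, hz2]
    rw [h1, h2]

lemma xor_surj : Function.Surjective xorCA := by
  intro d
  set f : ℕ → ZMod 2 := fun n => ∑ i ∈ Finset.range n, d ((i : ℤ) + 1) with hf
  set g : ℕ → ZMod 2 := fun n => ∑ i ∈ Finset.range n, d (-(i : ℤ)) with hg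
  refine ⟨fun x => match x with | Int.ofNat n => f n | Int.negSucc n => g (n + 1), ?_⟩
  funext x
  have key : ∀ a b : ZMod 2, (a + b) + a = b := by decide
  have key2 : ∀ a b : ZMod 2, a + (a + b) = b := by decide
  simp only [xorCA]
  match x with
  | Int.ofNat 0 =>
    have e1 : (Int.ofNat 0 : ℤ) - 1 = Int.negSucc 0 := by decide
    rw [e1]
    show f 0 + g 1 = d (Int.ofNat 0)
    simp [hf, hg]
  | Int.ofNat (n+1) =>
    have e1 : (Int.ofNat (n+1) : ℤ) - 1 = Int.ofNat n := by
      simp [Int.ofNat_eq_coe]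
    rw [e1]
    show f (n+1) + f n = d (Int.ofNat (n+1))
    rw [hf]
    beta_reduce
    rw [Finset.sum_range_succ, key]
    congr 1
  | Int.negSucc n =>
    have e1 : (Int.negSucc n : ℤ) - 1 = Int.negSucc (n+1) := by
      simp [Int.negSucc_eq]; ring
    rw [e1]
    show g (n+1) + g (n+2) = d (Int.negSucc n)
    rw [hg]
    beta_reduce
    rw [show (∑ i ∈ Finset.range (n+1+1), d (-(i:ℤ)))
        = (∑ i ∈ Finset.range (n+1), d (-(i:ℤ))) + d (-((n+1 : ℕ) : ℤ))
      from Finset.sum_range_succ _ _, key2]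
    congr 1

theorem stmt11 :
    (∀ k l : ℕ, propB xorCA 0 (2 ^ k) l 0) ∧
    (∀ (c : ℤ → ZMod 2) (k : ℕ), xorCA^[2 ^ k] c 0 = c 0 + c (-(2 ^ k : ℤ))) ∧
    (∀ (k l : ℕ) (z : ℤ), -(l : ℤ) ≤ z → z < 0 →
      ∀ (c : ℤ → ZMod 2) (q : ZMod 2),
        xorCA^[2 ^ k] (phiCfg c q) z = xorCA^[2 ^ k] c z) ∧
    ((0 : ℝ), (1 : ℝ)) ∈ Xp 2 xorCA ∧ Function.Surjective xorCA := by
  refine ⟨fun k l => propB_xor k l 0 (by positivity), ?_, ?_, ?_, xor_surj⟩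
  · intro c k
    rw [iter_pow]
    congr 1
    ring_nf
  · intro k l z hl hz c q
    rw [iter_pow, iter_pow]
    have h1 : phiCfg c q z = c z := by
      simp [phiCfg, show z ≠ 0 by omega]
    have h2 : phiCfg c q (z - 2^k) = c (z - 2^k) := by
      have : (0:ℤ) < 2^k := by positivity
      simp [phiCfg, show z - 2^k ≠ 0 by omega]
    rw [h1, h2]
  · refine ⟨by norm_num, 1, ?_⟩
    filter_upwards [eventually_ge_atTop 1] with n hn
    refine ⟨0, 2 ^ n, by norm_num, by norm_num, ?_⟩
    have : (2:ℕ)^(n-1) = 2^(n-1) := rfl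
    apply propB_xor
    have h : n - 1 < n := by omega
    calc ((2^(n-1) : ℕ) : ℤ) < ((2^n : ℕ) : ℤ) := by exact_mod_cast Nat.pow_lt_pow_right one_lt_two h
    _ = 2 ^ n := by push_cast; ring
end

section
/- Let ⊕ be the XOR CA over ℤ/2ℤ with ⊕(c)_x = c(x) + c(x-1), and for nonnegative integers a let B_a be the set of binary digits of a. Then X_2(⊕) equals the set of points (x,y) ∈ ℝ × [0,∞) of the form x = a/2^n, y = b/2^n with a, b, n ∈ ℕ and B_a ⊆ B_b. -/
open Filter Function

lemma xorCA_iterate (y : ℕ) (c : ℤ → ZMod 2) (z : ℤ) :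
    xorCA^[y] c z = ∑ i ∈ Finset.range (y+1), (y.choose i : ZMod 2) * c (z - i) := by
  induction y generalizing c z with
  | zero => simp
  | succ y ih =>
    rw [Function.iterate_succ_apply, ih]
    have hL : ∑ i ∈ Finset.range (y+1), (y.choose i : ZMod 2) * (xorCA c) (z - i)
        = (∑ i ∈ Finset.range (y+1), (y.choose i : ZMod 2) * c (z - i))
          + ∑ i ∈ Finset.range (y+1), (y.choose i : ZMod 2) * c (z - 1 - i) := by
      rw [← Finset.sum_add_distrib]
      refine Finset.sum_congr rfl fun i _ => ?_
      have : z - i - 1 = z - 1 - i := by ring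
      simp [xorCA, mul_add, this]
    rw [hL]
    have hR : ∑ i ∈ Finset.range (y+2), ((y+1).choose i : ZMod 2) * c (z - i)
        = (∑ i ∈ Finset.range (y+1), ((y+1).choose (i+1) : ZMod 2) * c (z - (i+1)))
          + ((y+1).choose 0 : ZMod 2) * c (z - 0) := Finset.sum_range_succ' _ _
    rw [hR]
    have hsplit : ∀ i, ((y+1).choose (i+1) : ZMod 2) = (y.choose i : ZMod 2) + (y.choose (i+1) : ZMod 2) := by
      intro i; rw [Nat.choose_succ_succ]; push_cast; ring
    have h2 : ∑ i ∈ Finset.range (y+1), ((y+1).choose (i+1) : ZMod 2) * c (z - (i+1))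
        = (∑ i ∈ Finset.range (y+1), (y.choose i : ZMod 2) * c (z - 1 - i))
          + ∑ i ∈ Finset.range (y+1), (y.choose (i+1) : ZMod 2) * c (z - (i+1)) := by
      rw [← Finset.sum_add_distrib]
      refine Finset.sum_congr rfl fun i _ => ?_
      rw [hsplit]
      have : z - (↑i + 1) = z - 1 - i := by push_cast; ring
      rw [this]; ring
    rw [h2]
    have h3 : ∑ i ∈ Finset.range (y+1), (y.choose (i+1) : ZMod 2) * c (z - (i+1))
        = (∑ i ∈ Finset.range (y+2), (y.choose i : ZMod 2) * c (z - i)) - (y.choose 0 : ZMod 2) * c (z - 0) := by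
      rw [Finset.sum_range_succ' (fun i => (y.choose i : ZMod 2) * c (z - i)) (y+1)]
      push_cast
      ring
    have h4 : ∑ i ∈ Finset.range (y+2), (y.choose i : ZMod 2) * c (z - i)
        = ∑ i ∈ Finset.range (y+1), (y.choose i : ZMod 2) * c (z - i) := by
      rw [Finset.sum_range_succ]; simp
    rw [h3, h4]
    push_cast [Nat.choose_zero_right]
    ring


lemma mul_eq_one_zmod2 (u v : ZMod 2) : u * v = 1 ↔ u = 1 ∧ v = 1 := by revert u v; decide

lemma lucas2 : ∀ b a : ℕ, ((b.choose a : ZMod 2) = 1 ↔ ∀ i, a.testBit i = true → b.testBit i = true) := by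
  intro b
  induction b using Nat.strong_induction_on with
  | _ b ih =>
    intro a
    rcases Nat.eq_zero_or_pos b with hb | hb
    · subst hb
      rcases Nat.eq_zero_or_pos a with ha | ha
      · subst ha; simp
      · rw [Nat.choose_eq_zero_of_lt ha]
        simp only [Nat.cast_zero]
        constructor
        · intro h; exact absurd h (by decide)
        · intro h
          exfalso
          have : a = 0 := Nat.eq_of_testBit_eq fun i => by
            simp only [Nat.zero_testBit]
            by_contra hc
            have := h i (by simpa using hc)
            simp at this
          omega
    · have := Fact.mk Nat.prime_two
      have hmod : (b.choose a : ZMod 2) = ((b % 2).choose (a % 2) : ZMod 2) * ((b / 2).choose (a / 2) : ZMod 2) := by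
        have := (ZMod.natCast_eq_natCast_iff _ _ 2).mpr
          (Choose.choose_modEq_choose_mod_mul_choose_div_nat (n := b) (k := a) (p := 2))
        push_cast at this
        exact this
      rw [hmod, mul_eq_one_zmod2]
      have h1 : (((b % 2).choose (a % 2) : ZMod 2) = 1) ↔ (a.testBit 0 = true → b.testBit 0 = true) := by
        have ha2 := Nat.mod_two_eq_zero_or_one a
        have hb2 := Nat.mod_two_eq_zero_or_one b
        rcases ha2 with h | h <;> rcases hb2 with h' | h' <;>
          simp [h, h', Nat.testBit_zero]
      have h2 := ih (b / 2) (by omega) (a / 2)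
      rw [h1, h2]
      constructor
      · rintro ⟨hz, hs⟩ i hi
        cases i with
        | zero => exact hz hi
        | succ i => rw [Nat.testBit_succ] at hi ⊢; exact hs i hi
      · intro h
        exact ⟨h 0, fun i hi => by
          rw [← Nat.testBit_succ] at hi ⊢; exact h (i+1) hi⟩

lemma le_of_bits {a b : ℕ} (h : ∀ i, a.testBit i = true → b.testBit i = true) : a ≤ b := by
  have : a &&& b = a := Nat.eq_of_testBit_eq fun i => by
    rw [Nat.testBit_and]
    cases ha : a.testBit i
    · simp
    · simp [h i ha]
  calc a = a &&& b := this.symm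
    _ ≤ b := Nat.and_le_right


/-- coefficient of the cell-0 value in `xorCA^[y] · z`. -/
def wcoef (y : ℕ) (z : ℤ) : ZMod 2 :=
  if 0 ≤ z ∧ z ≤ (y : ℤ) then (y.choose z.toNat : ZMod 2) else 0

lemma iterate_phiCfg (y : ℕ) (c : ℤ → ZMod 2) (q : ZMod 2) (z : ℤ) :
    xorCA^[y] (phiCfg c q) z = xorCA^[y] (phiCfg c 0) z + q * wcoef y z := by
  rw [xorCA_iterate, xorCA_iterate]
  have hsplit : ∀ i : ℕ, phiCfg c q (z - i) = phiCfg c 0 (z - i) + (if z - (i:ℤ) = 0 then q else 0) := by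
    intro i
    by_cases h : z - (i:ℤ) = 0 <;> simp [phiCfg, h]
  simp only [hsplit, mul_add, Finset.sum_add_distrib]
  congr 1
  rw [wcoef]
  by_cases hz : 0 ≤ z ∧ z ≤ (y : ℤ)
  · rw [if_pos hz]
    rw [Finset.sum_eq_single z.toNat]
    · have : z - (z.toNat : ℤ) = 0 := by omega
      rw [if_pos this]; ring
    · intro i _ hi
      have : ¬ (z - (i:ℤ) = 0) := by omega
      simp [this]
    · intro h
      exfalso
      apply h
      rw [Finset.mem_range]
      omega
  · rw [if_neg hz]
    rw [Finset.sum_eq_zero, mul_zero]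
    intro i hi
    rw [Finset.mem_range] at hi
    have : ¬ (z - (i:ℤ) = 0) := by omega
    simp [this]

lemma propB_xorCA (x : ℤ) (y l r : ℕ) :
    propB xorCA x y l r ↔ ∀ z : ℤ, x - (l:ℤ) ≤ z → z ≤ x + (r:ℤ) → (wcoef y z = 1 ↔ z = x) := by
  constructor
  · rintro ⟨hbij, hconst⟩ z hzl hzr
    constructor
    · intro hw
      by_contra hne
      have := hconst (fun _ => 0) z hzl hzr hne 1 0
      rw [iterate_phiCfg, iterate_phiCfg, hw] at this
      simp at this
    · rintro rfl
      by_contra hw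
      have hw0 : wcoef y z = 0 := by
        have : ∀ u : ZMod 2, u ≠ 1 → u = 0 := by decide
        exact this _ hw
      have := hbij (fun _ => 0)
      have hinj := this.1
      have h01 := hinj (a₁ := 0) (a₂ := 1) (by
        show xorCA^[y] (phiCfg _ 0) z = xorCA^[y] (phiCfg _ 1) z
        rw [iterate_phiCfg _ _ 1 z, hw0, mul_zero, add_zero])
      exact absurd h01 (by decide)
  · intro h
    constructor
    · intro c
      have hx : wcoef y x = 1 := (h x (by omega) (by omega)).mpr rfl
      have heq : (fun q : ZMod 2 => xorCA^[y] (phiCfg c q) x)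
          = fun q => xorCA^[y] (phiCfg c 0) x + q := by
        funext q; rw [iterate_phiCfg, hx, mul_one]
      rw [heq]
      exact (Equiv.addLeft (xorCA^[y] (phiCfg c 0) x)).bijective
    · intro c z hzl hzr hne q q'
      have hw : wcoef y z = 0 := by
        have h1 := (h z hzl hzr)
        have : wcoef y z ≠ 1 := fun hc => hne (h1.mp hc)
        revert this
        have : ∀ u : ZMod 2, u ≠ 1 → u = 0 := by decide
        exact this _
      rw [iterate_phiCfg y c q z, iterate_phiCfg y c q' z, hw]
      ring


lemma wcoef_eq_one (y : ℕ) (z : ℤ) :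
    wcoef y z = 1 ↔ 0 ≤ z ∧ z ≤ (y:ℤ) ∧ ∀ i, z.toNat.testBit i = true → y.testBit i = true := by
  unfold wcoef
  by_cases h : 0 ≤ z ∧ z ≤ (y:ℤ)
  · rw [if_pos h, lucas2]; tauto
  · rw [if_neg h]
    constructor
    · intro h0; exact absurd h0 (by decide)
    · intro ⟨h1, h2, _⟩; exact absurd ⟨h1, h2⟩ h

lemma bits_mul_pow {a b : ℕ} (s : ℕ) (h : ∀ i, a.testBit i = true → b.testBit i = true) :
    ∀ i, (a * 2^s).testBit i = true → (b * 2^s).testBit i = true := by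
  intro i
  rw [← Nat.shiftLeft_eq, ← Nat.shiftLeft_eq, Nat.testBit_shiftLeft, Nat.testBit_shiftLeft]
  intro hi
  rcases Bool.and_eq_true_iff.mp hi with ⟨hd, hb⟩
  exact Bool.and_eq_true_iff.mpr ⟨hd, h _ hb⟩

theorem stmt12 :
    Xp 2 xorCA = {v : ℝ × ℝ | ∃ a b n : ℕ,
      v.1 = (a : ℝ) / 2 ^ n ∧ v.2 = (b : ℝ) / 2 ^ n ∧
      ∀ i : ℕ, a.testBit i = true → b.testBit i = true} := by
  ext ⟨v1, v2⟩
  simp only [Xp, Set.mem_setOf_eq]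
  constructor
  · rintro ⟨hv2, k, hev⟩
    obtain ⟨n, a, b, ha, hb, hB⟩ := hev.exists
    rw [propB_xorCA] at hB
    have hx1 : wcoef b a = 1 := (hB a (by
        have : (0:ℤ) ≤ ((2 ^ (n - k) : ℕ) : ℤ) := Int.natCast_nonneg _
        omega)
      (by
        have : (0:ℤ) ≤ ((2 ^ (n - k) : ℕ) : ℤ) := Int.natCast_nonneg _
        omega)).mpr rfl
    rw [wcoef_eq_one] at hx1
    obtain ⟨ha0, _, hbits⟩ := hx1
    refine ⟨a.toNat, b, n, ?_, ?_, hbits⟩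
    · have h2n : (0:ℝ) < 2^n := by positivity
      have haR : ((a.toNat : ℕ) : ℝ) = v1 * 2 ^ n := by
        have hcast : ((a.toNat : ℕ) : ℝ) = ((a:ℤ) : ℝ) := by
          exact_mod_cast congrArg (fun t : ℤ => (t : ℝ)) (Int.toNat_of_nonneg ha0)
        rw [hcast, ha]; norm_num
      rw [eq_div_iff h2n.ne']
      exact haR.symm
    · have h2n : (0:ℝ) < 2^n := by positivity
      rw [eq_div_iff h2n.ne']
      have : ((b:ℕ) : ℝ) = v2 * 2 ^ n := by rw [hb]; norm_num
      exact this.symm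
  · rintro ⟨a, b, n, h1, h2, hbits⟩
    refine ⟨by rw [h2]; positivity, n+1, ?_⟩
    filter_upwards [eventually_ge_atTop (n+1)] with m hm
    set s := m - n with hs
    have hm' : m = n + s := by omega
    have hs1 : 1 ≤ s := by omega
    refine ⟨((a * 2^s : ℕ) : ℤ), b * 2^s, ?_, ?_, ?_⟩
    · rw [h1, hm', pow_add]
      have h2n : (2:ℝ)^n ≠ 0 := by positivity
      push_cast
      field_simp
    · rw [h2, hm', pow_add]
      have h2n : (2:ℝ)^n ≠ 0 := by positivity
      push_cast
      field_simp
    · rw [propB_xorCA]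
      have hrad : ((2 ^ (m - (n+1)) : ℕ) : ℤ) = 2 ^ (s - 1) := by
        have he : m - (n+1) = s - 1 := by omega
        rw [he]; push_cast; ring
      intro z hzl hzr
      rw [hrad] at hzl hzr
      rw [wcoef_eq_one]
      constructor
      · rintro ⟨hz0, hzb, hzbits⟩
        -- 2^s divides z.toNat
        have hlow : ∀ i < s, z.toNat.testBit i = false := by
          intro i hi
          by_contra hc
          have hzt := hzbits i (by simpa using hc)
          rw [← Nat.shiftLeft_eq, Nat.testBit_shiftLeft] at hzt
          simp only [ge_iff_le, Bool.and_eq_true, decide_eq_true_eq] at hzt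
          omega
        have hmod : z.toNat % 2^s = 0 := by
          apply Nat.eq_of_testBit_eq
          intro i
          rw [Nat.testBit_mod_two_pow, Nat.zero_testBit]
          by_cases hi : i < s
          · simp [hi, hlow i hi]
          · simp [hi]
        have hdvdN : 2^s ∣ z.toNat := Nat.dvd_of_mod_eq_zero hmod
        have hdvd : (2^s : ℤ) ∣ z := by
          have : ((z.toNat : ℕ) : ℤ) = z := Int.toNat_of_nonneg hz0
          rw [← this]
          exact_mod_cast Int.natCast_dvd_natCast.mpr hdvdN
        have hdvd2 : (2^s : ℤ) ∣ (z - ((a * 2^s : ℕ) : ℤ)) := by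
          apply dvd_sub hdvd
          push_cast
          exact dvd_mul_left _ _
        obtain ⟨t, ht⟩ := hdvd2
        have hpow : (2:ℤ)^s = 2 * 2^(s-1) := by
          rw [← pow_succ']
          congr 1
          omega
        have hP : (0:ℤ) < 2^(s-1) := by positivity
        have ht0 : t = 0 := by nlinarith [hzl, hzr, ht, hpow, hP]
        rw [ht0, mul_zero] at ht
        omega
      · rintro rfl
        refine ⟨Int.natCast_nonneg _, ?_, ?_⟩
        · have hab : a ≤ b := le_of_bits hbits
          exact_mod_cast Nat.mul_le_mul_right _ hab
        · rw [Int.toNat_natCast]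
          exact bits_mul_pow s hbits
end

section
/- Suppose F and G are cellular automata, p ≥ 2 is an integer, and there exist positive rationals α, γ and a rational β such that the affine map π(x,y) = (αx + βy, γy) sends the closure of X_p(F) into the closure of X_p(G). If the closure of X_p(G) contains exactly two distinct half-lines through the origin, namely ℝ₊(0,1) and ℝ₊(-2,1), and the closure of X_p(F) contains the two half-lines ℝ₊(0,1) and ℝ₊(-1,1) and moreover the segment joining (0,1) and (-1,1) is in the closure of X_p(F) while the only segments in the closure of X_p(G) joining its two half-lines have slope -1 (in the sense that the closure of X_p(G) intersected with appropriate regions consists of segments of slope -1), then β = 0 and α = 2γ. (Geometric step of the impossibility argument.) -/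
open Filter Function

/-- The half-line through the origin with direction `v`. -/
def ray (v : ℝ × ℝ) : Set (ℝ × ℝ) := {w | ∃ t : ℝ, 0 ≤ t ∧ w = t • v}

theorem stmt17 {A B : Type*} [Fintype A] [Fintype B]
    (F : (ℤ → A) → (ℤ → A)) (G : (ℤ → B) → (ℤ → B))
    (hF : IsCA F) (hG : IsCA G) (p : ℕ) (hp : 2 ≤ p)
    (α β γ : ℚ) (hα : 0 < α) (hγ : 0 < γ)
    (hmap : ∀ v ∈ closure (Xp p F),
      ((α : ℝ) * v.1 + (β : ℝ) * v.2, (γ : ℝ) * v.2) ∈ closure (Xp p G))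
    (hG1 : ray ((0 : ℝ), (1 : ℝ)) ⊆ closure (Xp p G))
    (hG2 : ray ((-2 : ℝ), (1 : ℝ)) ⊆ closure (Xp p G))
    (hGonly : ∀ v : ℝ × ℝ, v ≠ 0 → ray v ⊆ closure (Xp p G) →
      ray v = ray ((0 : ℝ), (1 : ℝ)) ∨ ray v = ray ((-2 : ℝ), (1 : ℝ)))
    (hF1 : ray ((0 : ℝ), (1 : ℝ)) ⊆ closure (Xp p F))
    (hF2 : ray ((-1 : ℝ), (1 : ℝ)) ⊆ closure (Xp p F))
    (hFseg : segment ℝ ((0 : ℝ), (1 : ℝ)) ((-1 : ℝ), (1 : ℝ)) ⊆ closure (Xp p F))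
    (hGseg : ∀ u v : ℝ × ℝ, u ∈ ray ((0 : ℝ), (1 : ℝ)) → v ∈ ray ((-2 : ℝ), (1 : ℝ)) →
      u ≠ v → segment ℝ u v ⊆ closure (Xp p G) → v.2 - u.2 = -(v.1 - u.1)) :
    (β : ℝ) = 0 ∧ (α : ℝ) = 2 * (γ : ℝ) := by
  have hγR : (0:ℝ) < (γ:ℝ) := by exact_mod_cast hγ
  have hαR : (0:ℝ) < (α:ℝ) := by exact_mod_cast hα
  have key : ∀ a b : ℝ, 0 < b → ray (a, b) ⊆ closure (Xp p G) →
      a = 0 ∨ a = -2 * b := by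
    intro a b hb hsub
    have hne : ((a, b) : ℝ × ℝ) ≠ 0 := by
      intro h
      exact hb.ne' (congrArg Prod.snd h)
    have hmem : ((a, b) : ℝ × ℝ) ∈ ray (a, b) := ⟨1, zero_le_one, by simp⟩
    rcases hGonly _ hne hsub with h | h
    · rw [h] at hmem
      obtain ⟨t, ht, heq⟩ := hmem
      have h1 := congrArg Prod.fst heq
      simp [Prod.smul_def] at h1
      exact Or.inl h1
    · rw [h] at hmem
      obtain ⟨t, ht, heq⟩ := hmem
      have h1 := congrArg Prod.fst heq
      have h2 := congrArg Prod.snd heq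
      simp [Prod.smul_def] at h1 h2
      right
      rw [h1, ← h2]
      ring
  have hsub1 : ray ((β:ℝ), (γ:ℝ)) ⊆ closure (Xp p G) := by
    rintro w ⟨t, ht, rfl⟩
    have hu : ((t • ((0:ℝ),(1:ℝ))) : ℝ×ℝ) ∈ closure (Xp p F) := hF1 ⟨t, ht, rfl⟩
    have h := hmap _ hu
    have : ((α:ℝ) * (t • ((0:ℝ),(1:ℝ))).1 + (β:ℝ) * (t • ((0:ℝ),(1:ℝ))).2,
        (γ:ℝ) * (t • ((0:ℝ),(1:ℝ))).2) = t • ((β:ℝ), (γ:ℝ)) := by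
      simp [Prod.smul_def]; constructor <;> ring
    rwa [this] at h
  have hsub2 : ray ((β:ℝ) - (α:ℝ), (γ:ℝ)) ⊆ closure (Xp p G) := by
    rintro w ⟨t, ht, rfl⟩
    have hu : ((t • ((-1:ℝ),(1:ℝ))) : ℝ×ℝ) ∈ closure (Xp p F) := hF2 ⟨t, ht, rfl⟩
    have h := hmap _ hu
    have : ((α:ℝ) * (t • ((-1:ℝ),(1:ℝ))).1 + (β:ℝ) * (t • ((-1:ℝ),(1:ℝ))).2,
        (γ:ℝ) * (t • ((-1:ℝ),(1:ℝ))).2) = t • ((β:ℝ) - (α:ℝ), (γ:ℝ)) := by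
      simp [Prod.smul_def]; constructor <;> ring
    rwa [this] at h
  rcases key _ _ hγR hsub1 with h1 | h1 <;>
    rcases key _ _ hγR hsub2 with h2 | h2 <;>
    constructor <;> linarith
end
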